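/- arXiv:math/0508570 — 5 statements merged into one kernel-verified Lean document; each statement's English description precedes it below -/
import Mathlib

section
/- For all integers n ≥ 1 and all k ≥ 0, the coefficients R_{k,m} satisfy the recursion R_{k,2n+1} = (k+1)·R_{k+1,2n} + (2n+1−k)·R_{k,2n}. -/
namespace DescentParity

/-- Number of descent positions i (1-indexed adjacent pairs) of a permutation of {1,…,m}
    whose first (larger) entry is even. Entries of `Fin m` represent values via `(·:ℕ)+1`. -/
def desBegE (m : ℕ) (σ : Equiv.Perm (Fin m)) : ℕ :=
  (Finset.univ.filter (fun p : Fin m × Fin m =>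
    (p.2 : ℕ) = (p.1 : ℕ) + 1 ∧ σ p.2 < σ p.1 ∧ Even ((σ p.1 : ℕ) + 1))).card

def desEndE (m : ℕ) (σ : Equiv.Perm (Fin m)) : ℕ :=
  (Finset.univ.filter (fun p : Fin m × Fin m =>
    (p.2 : ℕ) = (p.1 : ℕ) + 1 ∧ σ p.2 < σ p.1 ∧ Even ((σ p.2 : ℕ) + 1))).card

def desBegO (m : ℕ) (σ : Equiv.Perm (Fin m)) : ℕ :=
  (Finset.univ.filter (fun p : Fin m × Fin m =>
    (p.2 : ℕ) = (p.1 : ℕ) + 1 ∧ σ p.2 < σ p.1 ∧ Odd ((σ p.1 : ℕ) + 1))).card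

def desEndO (m : ℕ) (σ : Equiv.Perm (Fin m)) : ℕ :=
  (Finset.univ.filter (fun p : Fin m × Fin m =>
    (p.2 : ℕ) = (p.1 : ℕ) + 1 ∧ σ p.2 < σ p.1 ∧ Odd ((σ p.2 : ℕ) + 1))).card

/-- The first entry σ₁ of the permutation is even. -/
def firstEven (m : ℕ) (σ : Equiv.Perm (Fin m)) : Prop :=
  ∃ i : Fin m, (i : ℕ) = 0 ∧ Even ((σ i : ℕ) + 1)

def firstOdd (m : ℕ) (σ : Equiv.Perm (Fin m)) : Prop :=
  ∃ i : Fin m, (i : ℕ) = 0 ∧ Odd ((σ i : ℕ) + 1)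

instance (m : ℕ) (σ : Equiv.Perm (Fin m)) : Decidable (firstEven m σ) := by
  unfold firstEven; infer_instance

instance (m : ℕ) (σ : Equiv.Perm (Fin m)) : Decidable (firstOdd m σ) := by
  unfold firstOdd; infer_instance

def R (k m : ℕ) : ℕ :=
  (Finset.univ.filter (fun σ : Equiv.Perm (Fin m) => desBegE m σ = k)).card

def M (k m : ℕ) : ℕ :=
  (Finset.univ.filter (fun σ : Equiv.Perm (Fin m) => desBegO m σ = k)).card

def P0 (k m : ℕ) : ℕ :=
  (Finset.univ.filter (fun σ : Equiv.Perm (Fin m) => firstOdd m σ ∧ desEndE m σ = k)).card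

def P1 (k m : ℕ) : ℕ :=
  (Finset.univ.filter (fun σ : Equiv.Perm (Fin m) => firstEven m σ ∧ desEndE m σ = k)).card

def Q0 (k m : ℕ) : ℕ :=
  (Finset.univ.filter (fun σ : Equiv.Perm (Fin m) => firstEven m σ ∧ desEndO m σ = k)).card

def Q1 (k m : ℕ) : ℕ :=
  (Finset.univ.filter (fun σ : Equiv.Perm (Fin m) => firstOdd m σ ∧ desEndO m σ = k)).card

/-!
Inserting the largest value `m + 1` into a permutation of `{1, …, m}` is a bijection
`Sₘ × {positions} ≃ Sₘ₊₁`. When `m` is even, `m + 1` is odd: the pair ending at it is an ascent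
and the descent starting at it has an odd top, so the only effect of the insertion is to destroy
the even-top descent it splits, if any.
Hence a permutation with `c` even-top descents has `c` insertions yielding `c - 1` of them and
`m + 1 - c` insertions yielding `c`.
-/

open Finset

def evenTopDescents {m : ℕ} (σ : Equiv.Perm (Fin m)) : Finset (Fin m) :=
  univ.filter fun i => ∃ j : Fin m, (j : ℕ) = i + 1 ∧ σ j < σ i ∧ Even ((σ i : ℕ) + 1)

lemma desBegE_eq_card_evenTopDescents (m : ℕ) (σ : Equiv.Perm (Fin m)) :
    desBegE m σ = #(evenTopDescents σ) := by
  refine card_nbij Prod.fst (fun p hp => ?_) (fun p hp q hq hpq => ?_) (fun i hi => ?_)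
  · simp only [coe_filter, mem_univ, true_and, Set.mem_ofPred_eq, evenTopDescents] at hp ⊢
    exact ⟨p.2, hp⟩
  · simp only [coe_filter, mem_univ, true_and, Set.mem_ofPred_eq] at hp hq
    exact Prod.ext hpq (Fin.ext (by rw [hp.1, hq.1, hpq]))
  · simp only [evenTopDescents, coe_filter, mem_univ, true_and, Set.mem_ofPred_eq] at hi
    obtain ⟨j, hj⟩ := hi
    exact ⟨(i, j), by simpa using hj, rfl⟩

lemma Fin.val_succAbove {m : ℕ} (j : Fin (m + 1)) (i : Fin m) :
    (j.succAbove i : ℕ) = if (i : ℕ) < j then (i : ℕ) else (i : ℕ) + 1 := by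
  rcases lt_or_ge i.castSucc j with h | h
  · simp [Fin.succAbove_of_castSucc_lt _ _ h, show (i : ℕ) < j from h]
  · simp [Fin.succAbove_of_le_castSucc _ _ h, show ¬ (i : ℕ) < j from not_lt.2 h]

lemma Fin.succAbove_adjacent_iff {m : ℕ} (j : Fin (m + 1)) (i i' : Fin m) :
    (j.succAbove i' : ℕ) = j.succAbove i + 1 ↔ (i' : ℕ) = i + 1 ∧ i.succ ≠ j := by
  rw [Fin.val_succAbove, Fin.val_succAbove, Ne, Fin.ext_iff, Fin.val_succ]
  split_ifs <;> omega

variable {m : ℕ}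

/-- Insert the largest value (`Fin.last m`, i.e. `m + 1`) at position `j`. -/
def insertMax (σ : Equiv.Perm (Fin m)) (j : Fin (m + 1)) : Equiv.Perm (Fin (m + 1)) :=
  (finSuccEquiv' j).trans ((Equiv.optionCongr σ).trans (finSuccEquiv' (Fin.last m)).symm)

@[simp] lemma insertMax_apply_self (σ : Equiv.Perm (Fin m)) (j : Fin (m + 1)) :
    insertMax σ j j = Fin.last m := by
  simp [insertMax]

@[simp] lemma insertMax_apply_succAbove (σ : Equiv.Perm (Fin m)) (j : Fin (m + 1)) (i : Fin m) :
    insertMax σ j (j.succAbove i) = (σ i).castSucc := by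
  simp [insertMax]

lemma insertMax_injective :
    Function.Injective fun x : Equiv.Perm (Fin m) × Fin (m + 1) => insertMax x.1 x.2 := by
  rintro ⟨σ, j⟩ ⟨σ', j'⟩ h
  simp only at h
  obtain rfl : j = j' := (insertMax σ' j').injective <| by
    rw [insertMax_apply_self, ← h, insertMax_apply_self]
  have hσ : σ = σ' := Equiv.ext fun i => Fin.castSucc_injective m <| by
    rw [← insertMax_apply_succAbove σ j, ← insertMax_apply_succAbove σ' j, h]
  rw [hσ]

variable (m) in
noncomputable def insertMaxEquiv : Equiv.Perm (Fin m) × Fin (m + 1) ≃ Equiv.Perm (Fin (m + 1)) :=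
  Equiv.ofBijective _ <| (Fintype.bijective_iff_injective_and_card _).2
    ⟨insertMax_injective, by simp [Fintype.card_perm, Nat.factorial_succ, mul_comm]⟩

lemma self_notMem_evenTopDescents_insertMax (hm : Even m) (σ : Equiv.Perm (Fin m))
    (j : Fin (m + 1)) : j ∉ evenTopDescents (insertMax σ j) := by
  simp only [evenTopDescents, mem_filter, mem_univ, true_and, insertMax_apply_self,
    Fin.val_last, ← Nat.not_odd_iff_even]
  rintro ⟨-, -, -, hodd⟩
  exact hodd hm.add_one

lemma succAbove_mem_evenTopDescents_insertMax_iff (σ : Equiv.Perm (Fin m)) (j : Fin (m + 1))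
    (i : Fin m) :
    j.succAbove i ∈ evenTopDescents (insertMax σ j) ↔ i ∈ evenTopDescents σ ∧ i.succ ≠ j := by
  simp only [evenTopDescents, mem_filter, mem_univ, true_and, j.exists_iff_succAbove,
    insertMax_apply_self, insertMax_apply_succAbove, Fin.castSucc_lt_castSucc_iff,
    Fin.val_castSucc, Fin.succAbove_adjacent_iff, (Fin.le_last _).not_gt, and_false, false_and,
    false_or]
  constructor
  · rintro ⟨i', ⟨hi', hj⟩, hlt, hev⟩
    exact ⟨⟨i', hi', hlt, hev⟩, hj⟩
  · rintro ⟨⟨i', hi', hlt, hev⟩, hj⟩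
    exact ⟨i', ⟨hi', hj⟩, hlt, hev⟩

lemma evenTopDescents_insertMax (hm : Even m) (σ : Equiv.Perm (Fin m)) (j : Fin (m + 1)) :
    evenTopDescents (insertMax σ j) =
      ((evenTopDescents σ).filter (·.succ ≠ j)).map j.succAboveEmb := by
  rw [Finset.ext_iff, j.forall_iff_succAbove]
  refine ⟨?_, fun i => ?_⟩
  · simp [self_notMem_evenTopDescents_insertMax hm, Fin.succAbove_ne]
  · simp [succAbove_mem_evenTopDescents_insertMax_iff]

lemma card_filter_succ_ne_add_ite (s : Finset (Fin m)) (j : Fin (m + 1)) :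
    #(s.filter (·.succ ≠ j)) + (if j ∈ s.map (Fin.succEmb m) then 1 else 0) = #s := by
  rw [← card_filter_add_card_filter_not (s := s) (·.succ ≠ j)]
  congr 1
  have hmap : (s.map (Fin.succEmb m)).filter (· = j) =
      (s.filter (·.succ = j)).map (Fin.succEmb m) := filter_map
  simp only [not_not, ← card_map (Fin.succEmb m), ← hmap, filter_eq']
  split_ifs <;> rfl

lemma card_filter_card_evenTopDescents_insertMax (hm : Even m) (σ : Equiv.Perm (Fin m))
    (k : ℕ) :
    (#{j | #(evenTopDescents (insertMax σ j)) = k} : ℤ) =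
      (k + 1) * (if #(evenTopDescents σ) = k + 1 then 1 else 0) +
        (m + 1 - k) * (if #(evenTopDescents σ) = k then 1 else 0) := by
  set S := (evenTopDescents σ).map (Fin.succEmb m)
  have hS : #S = #(evenTopDescents σ) := card_map _
  have key (j : Fin (m + 1)) :
      #(evenTopDescents (insertMax σ j)) + (if j ∈ S then 1 else 0) = #(evenTopDescents σ) := by
    rw [evenTopDescents_insertMax hm, card_map, card_filter_succ_ne_add_ite]
  by_cases h1 : #(evenTopDescents σ) = k + 1
  · have hfilter : ({j | #(evenTopDescents (insertMax σ j)) = k} : Finset _) = S := by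
      ext j
      have := key j
      split_ifs at this with hj <;> simp [hj] <;> omega
    simp [hfilter, hS, h1]
  by_cases h2 : #(evenTopDescents σ) = k
  · have hfilter : ({j | #(evenTopDescents (insertMax σ j)) = k} : Finset _) = Sᶜ := by
      ext j
      have := key j
      split_ifs at this with hj <;> simp [hj] <;> omega
    have hk : k ≤ m + 1 := h2 ▸ hS ▸ (card_le_univ S).trans_eq (Fintype.card_fin _)
    simp [hfilter, card_compl, hS, h2, Nat.cast_sub hk]
  · have hfilter : ({j | #(evenTopDescents (insertMax σ j)) = k} : Finset _) = ∅ := by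
      ext j
      have := key j
      split_ifs at this with hj <;> simp <;> omega
    simp [hfilter, h1, h2]

theorem R_succ_of_even (hm : Even m) (k : ℕ) :
    (R k (m + 1) : ℤ) = (k + 1) * R (k + 1) m + (m + 1 - k) * R k m := by
  have hR (l c : ℕ) :
      (R c l : ℤ) = ∑ σ : Equiv.Perm (Fin l), if #(evenTopDescents σ) = c then 1 else 0 := by
    rw [R, natCast_card_filter]
    simp only [desBegE_eq_card_evenTopDescents]
  rw [hR, ← (insertMaxEquiv m).sum_comp, Fintype.sum_prod_type]
  simp only [insertMaxEquiv, Equiv.ofBijective_apply, sum_boole,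
    card_filter_card_evenTopDescents_insertMax hm, sum_add_distrib, ← mul_sum, hR]

theorem stmt_0_general (n k : ℕ) :
    (R k (2*n+1) : ℤ) = ((k : ℤ) + 1) * R (k+1) (2*n) + ((2*n+1 : ℤ) - k) * R k (2*n) := by
  exact_mod_cast R_succ_of_even (even_two_mul n) k

theorem stmt_0 (n k : ℕ) (hn : 1 ≤ n) :
    (R k (2*n+1) : ℤ) = ((k : ℤ) + 1) * R (k+1) (2*n) + ((2*n+1 : ℤ) - k) * R k (2*n) :=
  stmt_0_general n k

end DescentParity
end

section
/- For all integers n ≥ 1 and all k with 0 ≤ k ≤ n, R_{k,2n} = (binom(n,k))²·(n!)². -/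
/-!
Build the permutations of `{1, …, m + 1}` by inserting the letter `m + 1` into one of the
`m + 1` gaps of a permutation of `{1, …, m}`. Unless it is placed last, the new letter starts a
descent, which counts iff `m + 1` is even; and it destroys the descent across the gap it splits,
a word with `s` counted descents having exactly `s` such gaps. So the number `N(m, k)` of
permutations of `{1, …, m}` with `k` counted descents satisfies
`N(m + 1, k) = (k + 1) N(m, k) + (m + 1 - k) N(m, k - 1)` for even `m + 1` and
`N(m + 1, k) = (m + 1 - k) N(m, k) + (k + 1) N(m, k + 1)` for odd `m + 1`, and induction on `n`
gives `N(2n, k) = C(n, k)² (n!)²` together with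
`N(2n + 1, k) = C(n, k) C(n + 1, k + 1) n! (n + 1)!`.
-/

namespace DescentParity

open Finset Nat

lemma card_filter_eq_of_two_valued {α : Type*} [DecidableEq α] {S G : Finset α} (hGS : G ⊆ S)
    {f : α → ℕ} {a b : ℕ} (hf : ∀ p ∈ S, f p = if p ∈ G then a else b) (k : ℕ) :
    #{p ∈ S | f p = k} = (if a = k then #G else 0) + (if b = k then #S - #G else 0) := by
  have hsplit : ∀ p ∈ S, (if f p = k then 1 else 0) =
      if p ∈ G then (if a = k then 1 else 0) else (if b = k then 1 else 0) := by
    intro p hp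
    rw [hf p hp]
    split_ifs <;> rfl
  rw [card_filter, sum_congr rfl hsplit, sum_ite, sum_const, sum_const, filter_mem_eq_inter,
    inter_eq_right.mpr hGS, filter_not, filter_mem_eq_inter, inter_eq_right.mpr hGS,
    card_sdiff_of_subset hGS]
  split_ifs <;> simp

lemma sum_map_ite_eq_mul_countP {α : Type*} (L : List α) (q : α → Prop) [DecidablePred q]
    (c : ℕ) : (L.map fun a => if q a then c else 0).sum = c * L.countP fun a => q a := by
  simp [List.sum_map_ite, List.countP_eq_length_filter, mul_comm]

section Descents

variable (P : ℕ → Prop)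

/-- `none` stands for a position outside the list. -/
def IsDescent (o o' : Option ℕ) : Prop := ∃ a ∈ o, ∃ b ∈ o', b < a ∧ P a

variable {P}

@[simp]
lemma isDescent_none_left (o : Option ℕ) : ¬ IsDescent P none o := by simp [IsDescent]

@[simp]
lemma isDescent_none_right (o : Option ℕ) : ¬ IsDescent P o none := by simp [IsDescent]

@[simp]
lemma isDescent_some_some (a b : ℕ) : IsDescent P (some a) (some b) ↔ b < a ∧ P a := by
  simp [IsDescent]

variable (P) [DecidablePred P]

instance (o o' : Option ℕ) : Decidable (IsDescent P o o') := by
  unfold IsDescent; infer_instance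

def descentSet (l : List ℕ) : Finset ℕ := {i ∈ range l.length | IsDescent P l[i]? l[i + 1]?}

/-- Gap `p` of a list sits between positions `p - 1` and `p`. -/
def descentGaps (l : List ℕ) : Finset ℕ := (descentSet P l).image (· + 1)

variable {P}

lemma card_descentSet_cons (a : ℕ) (l : List ℕ) :
    #(descentSet P (a :: l)) =
      (if IsDescent P (some a) l.head? then 1 else 0) + #(descentSet P l) := by
  simp only [descentSet, card_filter, List.length_cons, sum_range_succ', List.getElem?_cons_succ,
    List.getElem?_cons_zero, List.head?_eq_getElem?]
  rw [add_comm]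

lemma card_descentSet_append (u v : List ℕ) :
    #(descentSet P (u ++ v)) = #(descentSet P u) +
      (if IsDescent P u.getLast? v.head? then 1 else 0) + #(descentSet P v) := by
  induction u with
  | nil => simp [descentSet]
  | cons a u ih =>
    cases u with
    | nil =>
      rw [List.singleton_append, card_descentSet_cons, List.getLast?_singleton]
      simp [descentSet]
    | cons b u =>
      rw [List.cons_append, card_descentSet_cons, ih, card_descentSet_cons a (b :: u)]
      simp [add_assoc]

lemma card_descentSet_insert_max {u v : List ℕ} {x : ℕ} (hx : ∀ y ∈ u ++ v, y < x) :
    #(descentSet P (u ++ x :: v)) + (if IsDescent P u.getLast? v.head? then 1 else 0) =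
      #(descentSet P (u ++ v)) + (if v ≠ [] ∧ P x then 1 else 0) := by
  have hu : ¬ IsDescent P u.getLast? (some x) := by
    cases h : u.getLast? with
    | none => simp
    | some a => simpa using fun hxa _ => (hx a (by simp [List.mem_of_getLast? h])).not_gt hxa
  have hv : IsDescent P (some x) v.head? ↔ v ≠ [] ∧ P x := by
    cases v with
    | nil => simp
    | cons b v => simpa using fun _ => hx b (by simp)
  rw [card_descentSet_append, List.head?_cons, card_descentSet_cons, card_descentSet_append]
  simp only [hu, hv, if_false]
  ring

lemma card_descentGaps (l : List ℕ) : #(descentGaps P l) = #(descentSet P l) :=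
  card_image_of_injective _ (add_left_injective 1)

lemma descentGaps_subset_range (l : List ℕ) : descentGaps P l ⊆ range l.length := by
  intro p hp
  simp only [descentGaps, descentSet, mem_image, mem_filter, mem_range] at hp
  obtain ⟨i, ⟨-, hi⟩, rfl⟩ := hp
  rw [mem_range]
  by_contra h
  simp [List.getElem?_eq_none (not_lt.mp h)] at hi

lemma isDescent_take_drop_iff (l : List ℕ) (p : ℕ) :
    IsDescent P (l.take p).getLast? (l.drop p).head? ↔ p ∈ descentGaps P l := by
  rw [List.getLast?_take, List.head?_drop]
  rcases p with _ | i
  · simp [descentGaps]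
  · have hgap : i + 1 ∈ descentGaps P l ↔ i < l.length ∧ IsDescent P l[i]? l[i + 1]? := by
      simp [descentGaps, descentSet]
    rw [hgap, if_neg i.succ_ne_zero]
    by_cases hi : i < l.length
    · simp [hi]
    · simp [hi, List.getElem?_eq_none (by omega : l.length ≤ i + 1)]

lemma card_descentSet_insert_gap {l : List ℕ} {x : ℕ} (hx : ∀ y ∈ l, y < x) (p : ℕ) :
    #(descentSet P (l.take p ++ x :: l.drop p)) + (if p ∈ descentGaps P l then 1 else 0) =
      #(descentSet P l) + (if p < l.length ∧ P x then 1 else 0) := by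
  have h := card_descentSet_insert_max (P := P) (u := l.take p) (v := l.drop p) (x := x)
    (by rwa [List.take_append_drop])
  simpa only [isDescent_take_drop_iff, List.take_append_drop, ne_eq, List.drop_eq_nil_iff,
    not_le] using h

lemma card_filter_insert_of_pos {l : List ℕ} {x : ℕ} (hx : ∀ y ∈ l, y < x) (hPx : P x)
    (k : ℕ) :
    #{p ∈ range (l.length + 1) | #(descentSet P (l.take p ++ x :: l.drop p)) = k} =
      (if #(descentSet P l) = k then k + 1 else 0) +
        (if #(descentSet P l) + 1 = k then l.length + 1 - k else 0) := by
  have hgaps := descentGaps_subset_range (P := P) l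
  have hL : l.length ∉ descentGaps P l := fun h => by simpa using hgaps h
  have hsub : insert l.length (descentGaps P l) ⊆ range (l.length + 1) :=
    insert_subset (by simp) (hgaps.trans (range_subset_range.mpr (by omega)))
  rw [card_filter_eq_of_two_valued hsub (a := #(descentSet P l)) (b := #(descentSet P l) + 1),
    card_insert_of_notMem hL, card_descentGaps, card_range]
  · split_ifs <;> omega
  intro p hp
  have h := card_descentSet_insert_gap (P := P) hx p
  have hpL := mem_range.mp hp
  by_cases hpG : p ∈ descentGaps P l
  · have := mem_range.mp (hgaps hpG)
    simp only [mem_insert, hpG, or_true, if_true, hPx, and_true, this] at h ⊢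
    omega
  · simp only [mem_insert, hpG, or_false, if_false, hPx, and_true] at h ⊢
    split_ifs at h ⊢ <;> omega

lemma card_filter_insert_of_neg {l : List ℕ} {x : ℕ} (hx : ∀ y ∈ l, y < x) (hPx : ¬ P x)
    (k : ℕ) :
    #{p ∈ range (l.length + 1) | #(descentSet P (l.take p ++ x :: l.drop p)) = k} =
      (if #(descentSet P l) = k + 1 then k + 1 else 0) +
        (if #(descentSet P l) = k then l.length + 1 - k else 0) := by
  have hsub : descentGaps P l ⊆ range (l.length + 1) :=
    (descentGaps_subset_range l).trans (range_subset_range.mpr (by omega))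
  rw [card_filter_eq_of_two_valued hsub (a := #(descentSet P l) - 1) (b := #(descentSet P l)),
    card_descentGaps, card_range]
  · split_ifs <;> omega
  intro p _
  have h := card_descentSet_insert_gap (P := P) hx p
  simp only [hPx, and_false, if_false, add_zero] at h
  split_ifs at h ⊢ <;> omega

end Descents

lemma permutations'Aux_eq_map_range {α : Type*} (x : α) (l : List α) :
    l.permutations'Aux x = (List.range (l.length + 1)).map fun p => l.take p ++ x :: l.drop p := by
  induction l with
  | nil => simp
  | cons y l ih => simp [List.range_succ_eq_map, ih]

lemma countP_range_eq_card_filter (n : ℕ) (q : ℕ → Prop) [DecidablePred q] :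
    (List.range n).countP q = #{p ∈ range n | q p} := by
  simp [List.countP_eq_length_filter, Finset.card_def, Finset.filter_val, ← Multiset.coe_range]

/-- Listing `0, …, m - 1` in decreasing order makes `permutations'` build their permutations by
inserting the largest letter into the permutations of the others (`perms_succ`). -/
def perms (m : ℕ) : List (List ℕ) := (List.range m).reverse.permutations'

lemma perms_succ (m : ℕ) : perms (m + 1) = (perms m).flatMap (List.permutations'Aux m) := by
  simp [perms, List.range_succ]

lemma mem_perms {m : ℕ} {l : List ℕ} : l ∈ perms m ↔ l.Perm (List.range m) := by
  rw [perms, List.mem_permutations']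
  exact ⟨fun h => h.trans (List.reverse_perm _), fun h => h.trans (List.reverse_perm _).symm⟩

lemma lt_of_mem_perms {m : ℕ} {l : List ℕ} (hl : l ∈ perms m) : ∀ y ∈ l, y < m :=
  fun _ hy => List.mem_range.mp ((mem_perms.mp hl).subset hy)

lemma length_of_mem_perms {m : ℕ} {l : List ℕ} (hl : l ∈ perms m) : l.length = m := by
  simpa using (mem_perms.mp hl).length_eq

lemma nodup_perms (m : ℕ) : (perms m).Nodup :=
  (List.permutations_perm_permutations' _).nodup_iff.mp
    (List.nodup_permutations _ (List.nodup_reverse.mpr List.nodup_range))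

lemma length_perms (m : ℕ) : (perms m).length = m ! := by
  rw [perms, ← (List.permutations_perm_permutations' _).length_eq, List.length_permutations]
  simp

section Counting

variable (P : ℕ → Prop) [DecidablePred P]

def permCount (m k : ℕ) : ℕ := (perms m).countP fun l => #(descentSet P l) = k

variable {P}

lemma permCount_zero (k : ℕ) : permCount P 0 k = if k = 0 then 1 else 0 := by
  simp [permCount, perms, descentSet, eq_comm]

lemma permCount_succ (m k : ℕ) :
    permCount P (m + 1) k = ((perms m).map fun l =>
      #{p ∈ range (l.length + 1) | #(descentSet P (l.take p ++ m :: l.drop p)) = k}).sum := by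
  rw [permCount, perms_succ, List.countP_flatMap]
  congr 1
  refine List.map_congr_left fun l _ => ?_
  rw [Function.comp_apply, permutations'Aux_eq_map_range, List.countP_map]
  exact countP_range_eq_card_filter _ _

lemma permCount_succ_of_neg {m : ℕ} (hP : ¬ P m) (k : ℕ) :
    permCount P (m + 1) k = (k + 1) * permCount P m (k + 1) + (m + 1 - k) * permCount P m k := by
  rw [permCount_succ, List.map_congr_left fun l hl => by
    rw [card_filter_insert_of_neg (lt_of_mem_perms hl) hP, length_of_mem_perms hl]]
  rw [List.sum_map_add, sum_map_ite_eq_mul_countP, sum_map_ite_eq_mul_countP, permCount,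
    permCount]

lemma permCount_succ_zero_of_pos {m : ℕ} (hP : P m) :
    permCount P (m + 1) 0 = permCount P m 0 := by
  rw [permCount_succ, List.map_congr_left fun l hl => by
    rw [card_filter_insert_of_pos (lt_of_mem_perms hl) hP, length_of_mem_perms hl]]
  simp only [zero_add, Nat.add_one_ne_zero, if_false, add_zero, sum_map_ite_eq_mul_countP,
    one_mul, permCount]

lemma permCount_succ_succ_of_pos {m : ℕ} (hP : P m) (k : ℕ) :
    permCount P (m + 1) (k + 1) = (k + 2) * permCount P m (k + 1) + (m - k) * permCount P m k := by
  rw [permCount_succ, List.map_congr_left fun l hl => by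
    rw [card_filter_insert_of_pos (lt_of_mem_perms hl) hP, length_of_mem_perms hl]]
  simp only [add_left_inj, Nat.add_sub_add_right, List.sum_map_add, sum_map_ite_eq_mul_countP,
    permCount]

end Counting

lemma choose_sq_add_choose_sq (n k : ℕ) :
    (2 * n + 1 - k) * n.choose k ^ 2 + (k + 1) * n.choose (k + 1) ^ 2 =
      (n + 1) * n.choose k * (n + 1).choose (k + 1) := by
  rcases le_or_gt k n with hkn | hnk
  · obtain ⟨j, rfl⟩ := Nat.exists_eq_add_of_le hkn
    have r1 := Nat.choose_succ_right_eq (k + j) k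
    have r2 := Nat.add_one_mul_choose_eq (k + j) k
    rw [Nat.add_sub_cancel_left] at r1
    rw [show 2 * (k + j) + 1 - k = k + 2 * j + 1 by omega]
    refine Nat.eq_of_mul_eq_mul_left k.succ_pos ?_
    zify at r1 r2 ⊢
    linear_combination ((k + j).choose (k + 1) * ((k : ℤ) + 1) + (k + j).choose k * j) * r1 +
      (((k : ℤ) + j + 1) * (k + j).choose k) * r2
  · simp [Nat.choose_eq_zero_of_lt, hnk, Nat.lt_add_right 1 hnk]

lemma choose_mul_add_choose_mul (n k : ℕ) :
    (k + 2) * n.choose (k + 1) * (n + 1).choose (k + 2) +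
        (2 * n + 1 - k) * n.choose k * (n + 1).choose (k + 1) =
      (n + 1) * (n + 1).choose (k + 1) ^ 2 := by
  rcases le_or_gt k n with hkn | hnk
  · obtain ⟨j, rfl⟩ := Nat.exists_eq_add_of_le hkn
    have r1 := Nat.choose_succ_right_eq (k + j) k
    have r2 := Nat.add_one_mul_choose_eq (k + j) (k + 1)
    rw [Nat.add_sub_cancel_left] at r1
    rw [show 2 * (k + j) + 1 - k = k + 2 * j + 1 by omega, Nat.choose_succ_succ' (k + j) k]
    zify at r1 r2 ⊢
    linear_combination (-((k + j).choose (k + 1) : ℤ)) * r2 - ((k + j).choose k : ℤ) * r1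
  · simp [Nat.choose_eq_zero_of_lt, hnk, Nat.lt_add_right 1 hnk]

lemma permCount_two_mul_add_one {n : ℕ}
    (h : ∀ k, permCount (fun a => Even (a + 1)) (2 * n) k = n.choose k ^ 2 * n ! ^ 2) (k : ℕ) :
    permCount (fun a => Even (a + 1)) (2 * n + 1) k =
      n.choose k * (n + 1).choose (k + 1) * n ! * (n + 1)! := by
  rw [permCount_succ_of_neg (by simp [parity_simps]), h, h, Nat.factorial_succ]
  linear_combination n ! ^ 2 * choose_sq_add_choose_sq n k

lemma permCount_two_mul (n k : ℕ) :
    permCount (fun a => Even (a + 1)) (2 * n) k = n.choose k ^ 2 * n ! ^ 2 := by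
  induction n generalizing k with
  | zero => cases k <;> simp [permCount_zero]
  | succ n ih =>
    have hP : Even (2 * n + 1 + 1) := by simp [parity_simps]
    rw [show 2 * (n + 1) = 2 * n + 1 + 1 by ring]
    cases k with
    | zero =>
      rw [permCount_succ_zero_of_pos (m := 2 * n + 1) hP, permCount_two_mul_add_one ih,
        Nat.factorial_succ]
      simp only [zero_add, Nat.choose_zero_right, Nat.choose_one_right]
      ring
    | succ k =>
      rw [permCount_succ_succ_of_pos (m := 2 * n + 1) hP, permCount_two_mul_add_one ih,
        permCount_two_mul_add_one ih, Nat.factorial_succ]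
      linear_combination (n ! * ((n + 1) * n !)) * choose_mul_add_choose_mul n k

lemma card_descentSet_ofFn {P : ℕ → Prop} [DecidablePred P] {m : ℕ} (f : Fin m → ℕ) :
    #(descentSet P (List.ofFn f)) =
      #{p : Fin m × Fin m | (p.2 : ℕ) = p.1 + 1 ∧ f p.2 < f p.1 ∧ P (f p.1)} := by
  symm
  apply card_nbij (fun p => (p.1 : ℕ))
  · rintro ⟨i, j⟩ h
    simp only [coe_filter, mem_univ, true_and, Set.mem_ofPred_eq] at h
    obtain ⟨hj, hlt, hP⟩ := h
    have hi1 : (i : ℕ) + 1 < m := hj ▸ j.2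
    have hj' : (⟨i + 1, hi1⟩ : Fin m) = j := Fin.ext hj.symm
    simp [descentSet, List.getElem?_ofFn, hi1, hj', hlt, hP]
  · rintro ⟨i, j⟩ h ⟨i', j'⟩ h' hii'
    simp only [coe_filter, mem_univ, true_and, Set.mem_ofPred_eq, Fin.val_inj] at h h' hii'
    subst hii'
    simp [Fin.ext_iff, h.1, h'.1]
  · intro i hi
    simp only [descentSet, coe_filter, mem_range, List.length_ofFn, List.getElem?_ofFn,
      Set.mem_ofPred_eq] at hi
    obtain ⟨him, hd⟩ := hi
    by_cases hi1 : i + 1 < m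
    · simp only [him, hi1, dite_true, isDescent_some_some] at hd
      exact ⟨(⟨i, him⟩, ⟨i + 1, hi1⟩), by simpa using hd, rfl⟩
    · simp [hi1] at hd

def permWord {m : ℕ} (σ : Equiv.Perm (Fin m)) : List ℕ := List.ofFn fun i => (σ i : ℕ)

lemma desBegE_eq_card_descentSet {m : ℕ} (σ : Equiv.Perm (Fin m)) :
    desBegE m σ = #(descentSet (fun a => Even (a + 1)) (permWord σ)) := by
  rw [permWord, card_descentSet_ofFn]
  rfl

lemma permWord_injective (m : ℕ) : Function.Injective (permWord (m := m)) := fun _ _ h =>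
  Equiv.ext fun i => Fin.val_injective (congrFun (List.ofFn_injective h) i)

lemma permWord_mem_perms {m : ℕ} (σ : Equiv.Perm (Fin m)) : permWord σ ∈ perms m := by
  rw [mem_perms]
  have h := Equiv.Perm.ofFn_comp_perm σ Fin.val
  rwa [show List.ofFn (Fin.val : Fin m → ℕ) = List.range m by simp [List.ofFn_eq_map]] at h

lemma image_permWord (m : ℕ) : univ.image (permWord (m := m)) = (perms m).toFinset := by
  refine eq_of_subset_of_card_le (fun l hl => ?_) ?_
  · obtain ⟨σ, -, rfl⟩ := mem_image.mp hl
    exact List.mem_toFinset.mpr (permWord_mem_perms σ)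
  · rw [List.toFinset_card_of_nodup (nodup_perms m), length_perms,
      card_image_of_injective _ (permWord_injective m), Finset.card_univ, Fintype.card_perm,
      Fintype.card_fin]

lemma R_eq_permCount (k m : ℕ) : R k m = permCount (fun a => Even (a + 1)) m k := by
  simp only [R, desBegE_eq_card_descentSet]
  rw [← card_image_of_injective _ (permWord_injective m),
    ← filter_image (p := fun l => #(descentSet _ l) = k), image_permWord, permCount,
    List.countP_eq_length_filter, ← List.toFinset_card_of_nodup ((nodup_perms m).filter _),
    List.toFinset_filter]
  simp only [decide_eq_true_eq]

theorem stmt_3_general (n k : ℕ) :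
    R k (2*n) = (Nat.choose n k)^2 * (Nat.factorial n)^2 := by
  rw [R_eq_permCount, permCount_two_mul]

theorem stmt_3 (n k : ℕ) (hn : 1 ≤ n) (hk : k ≤ n) :
    R k (2*n) = (Nat.choose n k)^2 * (Nat.factorial n)^2 :=
  stmt_3_general n k

end DescentParity
end

section
/- For all integers n ≥ 1 and all k with 0 ≤ k ≤ n, (k+1)·R_{k,2n+1} = (binom(n,k))²·((n+1)!)². -/
namespace DescentParity

/-!
Build the permutations of `{1, …, m + 1}` by inserting `m + 1` into those of `{1, …, m}`.
Inserting it in front of an entry creates a descent with top `m + 1` and breaks the descent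
that previously ended at that entry, if any; inserting it at the end changes nothing. Counting
the insertion slots gives a recurrence for `R_{k,m}` whose shape depends on the parity of
`m + 1`, and the two steps `2n → 2n + 1 → 2n + 2` are solved by
`R_{j,2n} = (C(n,j) n!)²` and `R_{j,2n+1} = C(n,j) C(n+1,j+1) n! (n+1)!`.
The theorem is the odd case combined with `(k + 1) C(n+1,k+1) = (n + 1) C(n,k)`.
-/

open Finset

section Descents

variable (P : ℕ → Prop)

/-- `p` indexes the smaller entry of a descent whose top satisfies `P`. -/
def IsDescentAt (l : List ℕ) (p : ℕ) : Prop :=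
  0 < p ∧ p < l.length ∧ l.getD p 0 < l.getD (p - 1) 0 ∧ P (l.getD (p - 1) 0)

variable {P}

@[simp]
lemma not_isDescentAt_zero (l : List ℕ) : ¬ IsDescentAt P l 0 := fun h => h.1.false

lemma IsDescentAt.lt_length {l : List ℕ} {p : ℕ} (h : IsDescentAt P l p) : p < l.length := h.2.1

@[simp]
lemma not_isDescentAt_singleton_one (a : ℕ) : ¬ IsDescentAt P [a] 1 := by
  simp [IsDescentAt]

@[simp]
lemma isDescentAt_cons_cons_one (a b : ℕ) (t : List ℕ) :
    IsDescentAt P (a :: b :: t) 1 ↔ b < a ∧ P a := by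
  simp [IsDescentAt]

@[simp]
lemma isDescentAt_cons_add_two (a : ℕ) (t : List ℕ) (q : ℕ) :
    IsDescentAt P (a :: t) (q + 2) ↔ IsDescentAt P t (q + 1) := by
  simp only [IsDescentAt, List.length_cons, List.getD_cons_succ]
  constructor <;> rintro ⟨-, h, h'⟩ <;> exact ⟨by omega, by omega, h'⟩

variable [DecidablePred P]

instance (l : List ℕ) (p : ℕ) : Decidable (IsDescentAt P l p) := by
  unfold IsDescentAt; infer_instance

variable (P) in
def descentsWith : List ℕ → ℕ
  | a :: b :: t => (if b < a ∧ P a then 1 else 0) + descentsWith (b :: t)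
  | _ => 0

lemma descentsWith_cons (a : ℕ) (t : List ℕ) :
    descentsWith P (a :: t) = (if IsDescentAt P (a :: t) 1 then 1 else 0) + descentsWith P t := by
  cases t <;> simp [descentsWith]

lemma card_filter_isDescentAt (l : List ℕ) :
    #{p ∈ range (l.length + 1) | IsDescentAt P l p} = descentsWith P l := by
  induction l with
  | nil => simp [descentsWith]
  | cons a t ih =>
    rw [card_filter, List.length_cons, sum_range_succ', sum_range_succ', descentsWith_cons, ← ih,
      card_filter, sum_range_succ']
    simp only [isDescentAt_cons_add_two, not_isDescentAt_zero, if_false, zero_add, add_zero]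
    ring

lemma descentsWith_insertIdx_add {x : ℕ} :
    ∀ (l : List ℕ) {p : ℕ}, p ≤ l.length → (∀ a ∈ l, a < x) →
      descentsWith P (l.insertIdx p x) + (if IsDescentAt P l p then 1 else 0) =
        descentsWith P l + (if p < l.length ∧ P x then 1 else 0)
  | [], 0, _, _ => by simp [descentsWith]
  | a :: t, 0, _, hx => by
    simp [descentsWith, hx a]
    omega
  | [a], 1, _, hx => by simp [descentsWith, (hx a (by simp)).not_gt]
  | a :: b :: t, 1, _, hx => by
    simp [descentsWith, (hx a (by simp)).not_gt, hx b]
    omega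
  | a :: b :: t, p + 2, hp, hx => by
    have ih := descentsWith_insertIdx_add (b :: t) (p := p + 1) (by simpa using hp)
      (fun c hc => hx c (List.mem_cons_of_mem a hc))
    simp only [List.insertIdx_succ_cons, descentsWith_cons (a := a), isDescentAt_cons_add_two,
      isDescentAt_cons_cons_one, List.length_cons, Nat.add_lt_add_iff_right] at ih ⊢
    omega

end Descents

section RangePerms

def rangePerms : ℕ → Finset (List ℕ)
  | 0 => {[]}
  | m + 1 => (range (m + 1) ×ˢ rangePerms m).image fun q => q.2.insertIdx q.1 m

variable {α : Type*} [BEq α] [LawfulBEq α]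

lemma erase_insertIdx_idxOf {x : α} {l : List α} (hx : x ∈ l) :
    (l.erase x).insertIdx (l.idxOf x) x = l := by
  rw [List.erase_eq_eraseIdx_of_idxOf rfl]
  conv_rhs => rw [← List.insertIdx_eraseIdx_getElem (List.idxOf_lt_length_iff.2 hx)]
  rw [List.getElem_idxOf]

lemma idxOf_insertIdx_of_notMem {x : α} :
    ∀ {l : List α} {p : ℕ}, p ≤ l.length → x ∉ l → (l.insertIdx p x).idxOf x = p
  | _, 0, _, _ => by simp
  | a :: t, p + 1, hp, hx => by
    rw [List.insertIdx_succ_cons, List.idxOf_cons_ne _ (by rintro rfl; simp at hx),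
      idxOf_insertIdx_of_notMem (by simpa using hp) (by simp_all)]

lemma mem_rangePerms {m : ℕ} {l : List ℕ} : l ∈ rangePerms m ↔ l.Perm (List.range m) := by
  induction m generalizing l with
  | zero => simp [rangePerms]
  | succ m ih =>
    have range_succ_perm : (List.range (m + 1)).Perm (m :: List.range m) := by
      simp [List.range_succ]
    simp only [rangePerms, mem_image, mem_product, mem_range, Prod.exists, ih,
      range_succ_perm.congr_right l]
    constructor
    · rintro ⟨p, l', ⟨hp, hl'⟩, rfl⟩
      exact (List.perm_insertIdx m l' (by simp [hl'.length_eq]; omega)).trans (hl'.cons m)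
    · intro hl
      have hm : m ∈ l := hl.mem_iff.2 (by simp)
      refine ⟨l.idxOf m, l.erase m, ⟨?_, by simpa using hl.erase m⟩,
        erase_insertIdx_idxOf hm⟩
      simpa [hl.length_eq] using List.idxOf_lt_length_iff.2 hm

variable {m : ℕ} {l : List ℕ}

lemma length_of_mem_rangePerms (h : l ∈ rangePerms m) : l.length = m := by
  simpa using (mem_rangePerms.1 h).length_eq

lemma lt_of_mem_of_mem_rangePerms (h : l ∈ rangePerms m) {a : ℕ} (ha : a ∈ l) : a < m := by
  simpa using (mem_rangePerms.1 h).mem_iff.1 ha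

lemma notMem_of_mem_rangePerms (h : l ∈ rangePerms m) : m ∉ l :=
  fun hm => (lt_of_mem_of_mem_rangePerms h hm).false

lemma injOn_insertIdx_rangePerms (m : ℕ) :
    Set.InjOn (fun q : ℕ × List ℕ => q.2.insertIdx q.1 m)
      ↑(range (m + 1) ×ˢ rangePerms m) := by
  rintro ⟨p₁, l₁⟩ h₁ ⟨p₂, l₂⟩ h₂ (heq : l₁.insertIdx p₁ m = _)
  simp only [coe_product, Set.mem_prod, mem_coe, mem_range] at h₁ h₂
  have hp : p₁ = p₂ := by
    rw [← idxOf_insertIdx_of_notMem (l := l₁) (p := p₁)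
        (by rw [length_of_mem_rangePerms h₁.2]; omega) (notMem_of_mem_rangePerms h₁.2), heq,
      idxOf_insertIdx_of_notMem (by rw [length_of_mem_rangePerms h₂.2]; omega)
        (notMem_of_mem_rangePerms h₂.2)]
  subst hp
  exact Prod.ext rfl (List.insertIdx_injective p₁ m heq)

end RangePerms

lemma card_filter_ite_mem_eq {α : Type*} [DecidableEq α] {s t : Finset α} (h : s ⊆ t)
    (a b k : ℕ) :
    #{p ∈ t | (if p ∈ s then a else b) = k} =
      (if a = k then #s else 0) + (if b = k then #t - #s else 0) := by
  have hst := card_le_card h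
  split_ifs with ha hb hb
  · rw [filter_true_of_mem (by intros; split_ifs <;> assumption)]
    omega
  · rw [add_zero]; congr 1; ext p; grind
  · rw [zero_add, ← card_sdiff_of_subset h]; congr 1; ext p; grind
  · rw [add_zero, card_eq_zero, filter_eq_empty_iff]; intro p _; split_ifs <;> assumption

section Insertion

variable {P : ℕ → Prop} [DecidablePred P] {l : List ℕ}

lemma card_filter_descentsWith_insertIdx_of_not (hb : ∀ a ∈ l, a < l.length)
    (hP : ¬ P l.length) (k : ℕ) :
    #{p ∈ range (l.length + 1) | descentsWith P (l.insertIdx p l.length) = k} =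
      (if descentsWith P l = k + 1 then k + 1 else 0) +
        (if descentsWith P l = k then l.length + 1 - k else 0) := by
  set s := {p ∈ range (l.length + 1) | IsDescentAt P l p} with hs
  have key : ∀ p ∈ range (l.length + 1), descentsWith P (l.insertIdx p l.length) =
      if p ∈ s then descentsWith P l - 1 else descentsWith P l := by
    intro p hp
    have := descentsWith_insertIdx_add (P := P) l (Nat.lt_succ_iff.1 (mem_range.1 hp)) hb
    simp only [hP, and_false, if_false, hs, mem_filter, hp, true_and] at this ⊢
    split_ifs at this ⊢ <;> omega
  rw [filter_congr (fun p hp => by rw [key p hp]), card_filter_ite_mem_eq (filter_subset _ _),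
    card_filter_isDescentAt, card_range]
  split_ifs <;> omega

lemma card_filter_descentsWith_insertIdx_of_pos (hb : ∀ a ∈ l, a < l.length)
    (hP : P l.length) (k : ℕ) :
    #{p ∈ range (l.length + 1) | descentsWith P (l.insertIdx p l.length) = k} =
      (if descentsWith P l = k then k + 1 else 0) +
        (if descentsWith P l + 1 = k then l.length + 1 - k else 0) := by
  set s := {p ∈ range (l.length + 1) | IsDescentAt P l p} with hs
  have key : ∀ p ∈ range (l.length + 1), descentsWith P (l.insertIdx p l.length) =
      if p ∈ insert l.length s then descentsWith P l else descentsWith P l + 1 := by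
    intro p hp
    have hpl := Nat.lt_succ_iff.1 (mem_range.1 hp)
    have := descentsWith_insertIdx_add (P := P) l hpl hb
    simp only [hP, and_true, hs, mem_insert, mem_filter, hp, true_and] at this ⊢
    by_cases hD : IsDescentAt P l p
    · simp only [hD, if_true, or_true, hD.lt_length] at this ⊢; omega
    · simp only [hD, if_false, or_false] at this ⊢
      split_ifs at this ⊢ <;> omega
  have hl : l.length ∉ s := fun h => (mem_filter.1 h).2.lt_length.false
  rw [filter_congr (fun p hp => by rw [key p hp]),
    card_filter_ite_mem_eq (insert_subset (self_mem_range_succ _) (filter_subset _ _)),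
    card_insert_of_notMem hl, card_filter_isDescentAt, card_range]
  split_ifs <;> omega

end Insertion

section Recurrence

variable (P : ℕ → Prop) [DecidablePred P]

def descentCount (k m : ℕ) : ℕ := #{l ∈ rangePerms m | descentsWith P l = k}

lemma descentCount_succ (k m : ℕ) :
    descentCount P k (m + 1) =
      ∑ l ∈ rangePerms m, #{p ∈ range (m + 1) | descentsWith P (l.insertIdx p m) = k} := by
  rw [descentCount, rangePerms, filter_image,
    card_image_of_injOn ((injOn_insertIdx_rangePerms m).mono (filter_subset _ _)), card_filter,
    sum_product, sum_comm]
  simp only [card_filter]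

variable {P}

lemma descentCount_succ_of_not {m : ℕ} (hP : ¬ P m) (k : ℕ) :
    descentCount P k (m + 1) =
      (k + 1) * descentCount P (k + 1) m + (m + 1 - k) * descentCount P k m := by
  have per_list : ∀ l ∈ rangePerms m,
      #{p ∈ range (m + 1) | descentsWith P (l.insertIdx p m) = k} =
        (if descentsWith P l = k + 1 then k + 1 else 0) +
          (if descentsWith P l = k then m + 1 - k else 0) := by
    intro l hl
    obtain rfl := length_of_mem_rangePerms hl
    exact card_filter_descentsWith_insertIdx_of_not (fun a => lt_of_mem_of_mem_rangePerms hl) hP k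
  rw [descentCount_succ, sum_congr rfl per_list, sum_add_distrib]
  simp only [sum_ite, sum_const_zero, add_zero, sum_const, smul_eq_mul, descentCount, mul_comm]

lemma descentCount_succ_of_pos {m : ℕ} (hP : P m) (k : ℕ) :
    descentCount P k (m + 1) = (k + 1) * descentCount P k m +
      (m + 1 - k) * #{l ∈ rangePerms m | descentsWith P l + 1 = k} := by
  have per_list : ∀ l ∈ rangePerms m,
      #{p ∈ range (m + 1) | descentsWith P (l.insertIdx p m) = k} =
        (if descentsWith P l = k then k + 1 else 0) +
          (if descentsWith P l + 1 = k then m + 1 - k else 0) := by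
    intro l hl
    obtain rfl := length_of_mem_rangePerms hl
    exact card_filter_descentsWith_insertIdx_of_pos (fun a => lt_of_mem_of_mem_rangePerms hl) hP k
  rw [descentCount_succ, sum_congr rfl per_list, sum_add_distrib]
  simp only [sum_ite, sum_const_zero, add_zero, sum_const, smul_eq_mul, descentCount, mul_comm]

lemma descentCount_zero_succ_of_pos {m : ℕ} (hP : P m) :
    descentCount P 0 (m + 1) = descentCount P 0 m := by
  simp [descentCount_succ_of_pos hP]

lemma descentCount_succ_succ_of_pos {m : ℕ} (hP : P m) (j : ℕ) :
    descentCount P (j + 1) (m + 1) =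
      (j + 2) * descentCount P (j + 1) m + (m - j) * descentCount P j m := by
  rw [descentCount_succ_of_pos hP, Nat.add_sub_add_right]
  simp [descentCount]

end Recurrence

open Nat

lemma choose_mul_choose_succ_mul_factorial_eq (n k : ℕ) :
    n.choose k * (n + 1).choose (k + 1) * n ! * (n + 1)! =
      (k + 1) * (n.choose (k + 1) * n !) ^ 2 + (2 * n + 1 - k) * (n.choose k * n !) ^ 2 := by
  rcases le_or_gt k n with hk | hk
  · have pascal := choose_succ_succ' n k
    have ratio := choose_succ_right_eq n k
    rw [factorial_succ]
    zify [hk, (by omega : k ≤ 2 * n + 1)] at pascal ratio ⊢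
    linear_combination (n ! : ℤ) ^ 2 *
      ((n + 1) * (n.choose k : ℤ) * pascal + ((n.choose k : ℤ) - n.choose (k + 1)) * ratio)
  · simp [choose_eq_zero_of_lt hk, choose_eq_zero_of_lt (Nat.lt_succ_of_lt hk)]

lemma sq_choose_succ_mul_factorial_succ_eq (n j : ℕ) :
    ((n + 1).choose (j + 1) * (n + 1)!) ^ 2 =
      (j + 2) * (n.choose (j + 1) * (n + 1).choose (j + 2) * n ! * (n + 1)!) +
        (2 * n + 1 - j) * (n.choose j * (n + 1).choose (j + 1) * n ! * (n + 1)!) := by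
  rcases le_or_gt j n with hj | hj
  · have pascal := choose_succ_succ' n j
    have ratio := choose_succ_right_eq n j
    have absorb := add_one_mul_choose_eq n (j + 1)
    rw [factorial_succ]
    zify [hj, (by omega : j ≤ 2 * n + 1)] at pascal ratio absorb ⊢
    linear_combination ((n : ℤ) + 1) * (n ! : ℤ) ^ 2 *
      ((n.choose (j + 1) : ℤ) * absorb + (n.choose j : ℤ) * ratio +
        (((n : ℤ) + 1) * ((n + 1).choose (j + 1) + n.choose j + n.choose (j + 1)) -
          (2 * n + 1 - j) * n.choose j) * pascal)
  · simp [choose_eq_zero_of_lt hj, choose_eq_zero_of_lt (Nat.lt_succ_of_lt hj),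
      choose_eq_zero_of_lt (Nat.succ_lt_succ hj)]

/-- The entry `a` of a list stands for the value `a + 1`. -/
abbrev EvenValue (a : ℕ) : Prop := Even (a + 1)

lemma descentCount_two_mul_add_one_of_two_mul {n : ℕ}
    (h : ∀ j, descentCount EvenValue j (2 * n) = (n.choose j * n !) ^ 2) (j : ℕ) :
    descentCount EvenValue j (2 * n + 1) =
      n.choose j * (n + 1).choose (j + 1) * n ! * (n + 1)! := by
  rw [descentCount_succ_of_not (by simp [parity_simps]), h, h,
    choose_mul_choose_succ_mul_factorial_eq]

lemma descentCount_two_mul_add_two_of_two_mul_add_one {n : ℕ}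
    (h : ∀ j, descentCount EvenValue j (2 * n + 1) =
      n.choose j * (n + 1).choose (j + 1) * n ! * (n + 1)!) :
    ∀ j, descentCount EvenValue j (2 * n + 2) = ((n + 1).choose j * (n + 1)!) ^ 2
  | 0 => by
    rw [descentCount_zero_succ_of_pos (by simp [parity_simps]), h, factorial_succ]
    simp only [choose_zero_right, zero_add, choose_one_right]
    ring
  | j + 1 => by
    rw [descentCount_succ_succ_of_pos (by simp [parity_simps]), h, h,
      sq_choose_succ_mul_factorial_succ_eq]

lemma descentCount_two_mul (n j : ℕ) :
    descentCount EvenValue j (2 * n) = (n.choose j * n !) ^ 2 := by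
  induction n generalizing j with
  | zero => cases j <;> simp [descentCount, rangePerms, descentsWith, filter_singleton]
  | succ n ih =>
    exact descentCount_two_mul_add_two_of_two_mul_add_one
      (descentCount_two_mul_add_one_of_two_mul ih) j

lemma descentCount_two_mul_add_one (n j : ℕ) :
    descentCount EvenValue j (2 * n + 1) =
      n.choose j * (n + 1).choose (j + 1) * n ! * (n + 1)! :=
  descentCount_two_mul_add_one_of_two_mul (descentCount_two_mul n) j

lemma getD_ofFn {α : Type*} {m : ℕ} (f : Fin m → α) (d : α) {i : ℕ} (hi : i < m) :
    (List.ofFn f).getD i d = f ⟨i, hi⟩ := by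
  simp [List.getD_eq_getElem?_getD, hi]

lemma desBegE_eq_descentsWith (m : ℕ) (σ : Equiv.Perm (Fin m)) :
    desBegE m σ = descentsWith EvenValue (List.ofFn fun i => (σ i : ℕ)) := by
  rw [← card_filter_isDescentAt, List.length_ofFn, desBegE]
  refine card_bij (fun q _ => (q.2 : ℕ)) ?_ ?_ ?_
  · rintro ⟨i, j⟩ hij
    simp only [mem_filter, mem_univ, true_and] at hij
    obtain ⟨hji, hlt, hev⟩ := hij
    simp only [mem_filter, mem_range, IsDescentAt, List.length_ofFn]
    rw [getD_ofFn _ _ j.2, show (j : ℕ) - 1 = i by omega, getD_ofFn _ _ i.2]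
    exact ⟨by omega, by omega, j.2, hlt, hev⟩
  · rintro ⟨i, j⟩ hij ⟨i', j'⟩ hij' (h : (j : ℕ) = j')
    simp only [mem_filter, mem_univ, true_and] at hij hij'
    ext <;> simp <;> omega
  · intro p hp
    simp only [mem_filter, mem_range, IsDescentAt, List.length_ofFn] at hp
    obtain ⟨-, hp0, hpm, hlt, hev⟩ := hp
    refine ⟨(⟨p - 1, by omega⟩, ⟨p, hpm⟩), ?_, rfl⟩
    rw [getD_ofFn _ _ hpm, getD_ofFn _ _ (by omega)] at hlt
    rw [getD_ofFn _ _ (by omega)] at hev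
    simp only [mem_filter, mem_univ, true_and]
    exact ⟨show p = p - 1 + 1 by omega, hlt, hev⟩

lemma ofFn_perm_range {m : ℕ} (σ : Equiv.Perm (Fin m)) :
    (List.ofFn fun i => (σ i : ℕ)).Perm (List.range m) :=
  (σ.ofFn_comp_perm Fin.val).trans (.of_eq (List.ext_getElem (by simp) (by simp)))

lemma exists_ofFn_eq_of_mem_rangePerms {m : ℕ} {l : List ℕ} (hl : l ∈ rangePerms m) :
    ∃ σ : Equiv.Perm (Fin m), (List.ofFn fun i => (σ i : ℕ)) = l := by
  have hlen := length_of_mem_rangePerms hl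
  have hnd : l.Nodup := (mem_rangePerms.1 hl).nodup_iff.2 List.nodup_range
  let f : Fin m → Fin m := fun i =>
    ⟨l[i], lt_of_mem_of_mem_rangePerms hl (List.getElem_mem _)⟩
  have hf : Function.Injective f := fun i j hij =>
    Fin.ext (by simpa [f, hnd.getElem_inj_iff] using congrArg Fin.val hij)
  refine ⟨Equiv.ofBijective f (Finite.injective_iff_bijective.1 hf), ?_⟩
  apply List.ext_getElem (by simp [hlen])
  intro i _ _
  simp [f]

lemma R_eq_descentCount (k m : ℕ) : R k m = descentCount EvenValue k m := by
  rw [R, descentCount]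
  refine card_bij (fun σ _ => List.ofFn fun i => (σ i : ℕ)) ?_ ?_ ?_
  · intro σ hσ
    rw [mem_filter, ← desBegE_eq_descentsWith, mem_rangePerms]
    exact ⟨ofFn_perm_range σ, (mem_filter.1 hσ).2⟩
  · intro σ _ τ _ h
    exact Equiv.ext fun i => Fin.ext (congrFun (List.ofFn_injective h) i)
  · intro l hl
    rw [mem_filter] at hl
    obtain ⟨σ, rfl⟩ := exists_ofFn_eq_of_mem_rangePerms hl.1
    exact ⟨σ, by simpa [desBegE_eq_descentsWith] using hl.2, rfl⟩

theorem stmt_4_general (n k : ℕ) :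
    (k + 1) * R k (2*n+1) = (Nat.choose n k)^2 * (Nat.factorial (n+1))^2 := by
  have absorb := add_one_mul_choose_eq n k
  rw [R_eq_descentCount, descentCount_two_mul_add_one, factorial_succ]
  zify at absorb ⊢
  linear_combination -((n.choose k : ℤ) * n ! ^ 2 * (n + 1)) * absorb

theorem stmt_4 (n k : ℕ) (hn : 1 ≤ n) (hk : k ≤ n) :
    (k + 1) * R k (2*n+1) = (Nat.choose n k)^2 * (Nat.factorial (n+1))^2 :=
  stmt_4_general n k

end DescentParity
end

section
/- For all integers n ≥ 1 and all k with 0 ≤ k ≤ n, P_{0,k,2n+1} = P_{0,n−k,2n+1}, and for all k with 0 ≤ k ≤ n−1, P_{1,k,2n+1} = P_{1,n−k−1,2n+1}. -/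
/-
Identify a permutation with its word of values, so that `Fin.rev` acts on values as the
complement x ↦ 2n + 2 - x. Since 2n + 1 is odd, the complement preserves the parity of every
entry, in particular of σ₁, and it turns every descent into an ascent. Hence each position
j ≥ 2 carrying an even entry is a descent bottom in exactly one of σ and its complement, so
their two statistics add up to the number of even entries outside the first position,
n - [σ₁ even]. The complement is an involution, which gives the symmetries.
-/

namespace DescentParity

open Finset Equiv

lemma even_val_rev_add_one_iff {n : ℕ} (v : Fin (2*n+1)) :
    Even ((v.rev : ℕ) + 1) ↔ Even ((v : ℕ) + 1) := by
  have := v.is_lt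
  simp only [Fin.val_rev, Nat.even_iff]
  omega

lemma card_filter_even_val_add_one (n : ℕ) : #{v : Fin (2*n+1) | Even ((v : ℕ) + 1)} = n := by
  have hmul := Nat.card_multiples (2*n+1) 2
  rw [show (2*n+1)/2 = n by omega] at hmul
  rw [← card_map Fin.valEmbedding]
  convert hmul using 2
  ext e
  simp [even_iff_two_dvd, Fin.exists_iff, and_comm]

lemma card_filter_even_apply_add_one {n : ℕ} (σ : Perm (Fin (2*n+1))) :
    #{j | Even ((σ j : ℕ) + 1)} = n := by
  refine (card_equiv σ (t := {v : Fin (2*n+1) | Even ((v : ℕ) + 1)}) fun j => ?_).trans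
    (card_filter_even_val_add_one n)
  simp

lemma card_filter_adjacent_snd {m : ℕ} (q : Fin (m+1) → Prop) [DecidablePred q] :
    #{p : Fin (m+1) × Fin (m+1) | (p.2 : ℕ) = p.1 + 1 ∧ q p.2} = #{i : Fin m | q i.succ} := by
  symm
  refine card_nbij (fun i => (i.castSucc, i.succ)) ?_ ?_ ?_
  · intro i hi
    simpa using hi
  · intro i _ j _ h
    simpa using congrArg Prod.snd h
  · rintro ⟨a, b⟩ hp
    simp only [coe_filter, mem_univ, true_and, Set.mem_ofPred_eq] at hp
    obtain ⟨hadj, hq⟩ := hp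
    obtain ⟨i, hib, hia⟩ : ∃ i : Fin m, i.succ = b ∧ i.castSucc = a :=
      ⟨⟨a, by omega⟩, Fin.ext hadj.symm, rfl⟩
    exact ⟨i, by simpa [hib] using hq, by rw [← hib, ← hia]⟩

lemma desEndE_revPerm_mul_add {n : ℕ} (σ : Perm (Fin (2*n+1))) :
    desEndE (2*n+1) (Fin.revPerm * σ) + desEndE (2*n+1) σ =
      #{p : Fin (2*n+1) × Fin (2*n+1) | (p.2 : ℕ) = p.1 + 1 ∧ Even ((σ p.2 : ℕ) + 1)} := by
  rw [← card_filter_add_card_filter_not (p := fun p => σ p.2 < σ p.1), add_comm, desEndE,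
    desEndE, filter_filter, filter_filter]
  congr 2 <;> ext p <;> simp only [mem_filter, mem_univ, true_and]
  · tauto
  · simp only [Perm.mul_apply, Fin.revPerm_apply, Fin.rev_lt_rev, even_val_rev_add_one_iff]
    constructor
    · rintro ⟨hadj, hlt, he⟩; exact ⟨⟨hadj, he⟩, by omega⟩
    · rintro ⟨⟨hadj, he⟩, hnlt⟩
      have hne : σ p.1 ≠ σ p.2 := fun h => by rw [σ.injective h] at hadj; omega
      exact ⟨hadj, lt_of_le_of_ne (not_lt.mp hnlt) hne, he⟩

lemma desEndE_revPerm_mul_add_add_ite {n : ℕ} (σ : Perm (Fin (2*n+1))) :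
    desEndE (2*n+1) (Fin.revPerm * σ) + desEndE (2*n+1) σ +
      (if Even ((σ 0 : ℕ) + 1) then 1 else 0) = n := by
  rw [desEndE_revPerm_mul_add, card_filter_adjacent_snd (fun j => Even ((σ j : ℕ) + 1)),
    add_comm, ← Fin.card_filter_univ_succ' (fun j => Even ((σ j : ℕ) + 1))]
  exact card_filter_even_apply_add_one σ

lemma firstOdd_iff {m : ℕ} (σ : Perm (Fin (m+1))) :
    firstOdd (m+1) σ ↔ ¬Even ((σ 0 : ℕ) + 1) :=
  ⟨fun ⟨i, hi, h⟩ => (Fin.ext hi : i = 0) ▸ Nat.not_even_iff_odd.mpr h,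
    fun h => ⟨0, rfl, Nat.not_even_iff_odd.mp h⟩⟩

lemma firstEven_iff {m : ℕ} (σ : Perm (Fin (m+1))) :
    firstEven (m+1) σ ↔ Even ((σ 0 : ℕ) + 1) :=
  ⟨fun ⟨i, hi, h⟩ => (Fin.ext hi : i = 0) ▸ h, fun h => ⟨0, rfl, h⟩⟩

lemma firstOdd_revPerm_mul_iff {n : ℕ} (σ : Perm (Fin (2*n+1))) :
    firstOdd (2*n+1) (Fin.revPerm * σ) ↔ firstOdd (2*n+1) σ := by
  simp only [firstOdd_iff, Perm.mul_apply, Fin.revPerm_apply, even_val_rev_add_one_iff]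

lemma firstEven_revPerm_mul_iff {n : ℕ} (σ : Perm (Fin (2*n+1))) :
    firstEven (2*n+1) (Fin.revPerm * σ) ↔ firstEven (2*n+1) σ := by
  simp only [firstEven_iff, Perm.mul_apply, Fin.revPerm_apply, even_val_rev_add_one_iff]

lemma desEndE_revPerm_mul_add_of_firstOdd {n : ℕ} {σ : Perm (Fin (2*n+1))}
    (hσ : firstOdd (2*n+1) σ) : desEndE (2*n+1) (Fin.revPerm * σ) + desEndE (2*n+1) σ = n := by
  simpa [(firstOdd_iff σ).mp hσ] using desEndE_revPerm_mul_add_add_ite σ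

lemma desEndE_revPerm_mul_add_of_firstEven {n : ℕ} {σ : Perm (Fin (2*n+1))}
    (hσ : firstEven (2*n+1) σ) :
    desEndE (2*n+1) (Fin.revPerm * σ) + desEndE (2*n+1) σ = n - 1 := by
  have h := desEndE_revPerm_mul_add_add_ite σ
  rw [if_pos ((firstEven_iff σ).mp hσ)] at h
  omega

lemma card_filter_desEndE_eq_sub {n c k : ℕ} (p : Perm (Fin (2*n+1)) → Prop)
    [DecidablePred p]
    (hp : ∀ σ, p (Fin.revPerm * σ) ↔ p σ)
    (hc : ∀ σ, p σ → desEndE (2*n+1) (Fin.revPerm * σ) + desEndE (2*n+1) σ = c)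
    (hk : k ≤ c) :
    #{σ | p σ ∧ desEndE (2*n+1) σ = k} = #{σ | p σ ∧ desEndE (2*n+1) σ = c - k} := by
  refine card_equiv (Equiv.mulLeft Fin.revPerm) fun σ => ?_
  simp only [mem_filter, mem_univ, true_and, coe_mulLeft, hp]
  refine and_congr_right fun hσ => ?_
  have := hc σ hσ
  omega

theorem stmt_8_general (n : ℕ) :
    (∀ k ≤ n, P0 k (2*n+1) = P0 (n-k) (2*n+1)) ∧
    (∀ k ≤ n-1, P1 k (2*n+1) = P1 (n-k-1) (2*n+1)) := by
  refine ⟨fun k hk => ?_, fun k hk => ?_⟩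
  · exact card_filter_desEndE_eq_sub _ firstOdd_revPerm_mul_iff
      (fun _ => desEndE_revPerm_mul_add_of_firstOdd) hk
  · rw [show n - k - 1 = n - 1 - k by omega]
    exact card_filter_desEndE_eq_sub _ firstEven_revPerm_mul_iff
      (fun _ => desEndE_revPerm_mul_add_of_firstEven) hk

theorem stmt_8 (n : ℕ) (hn : 1 ≤ n) :
    (∀ k ≤ n, P0 k (2*n+1) = P0 (n-k) (2*n+1)) ∧
    (∀ k ≤ n-1, P1 k (2*n+1) = P1 (n-k-1) (2*n+1)) :=
  stmt_8_general n

end DescentParity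
end

section
/- For all integers n ≥ 1 and all k ≥ 0, R_{k,2n+1} = P_{0,k,2n+1} + P_{1,k,2n+1}. -/
namespace DescentParity

private lemma parity_flip {n x : ℕ} (hx : x < 2*n+1) :
    Even (2*n+1 - (x+1) + 1) ↔ Even (x+1) := by
  rw [Nat.even_iff, Nat.even_iff]; omega

private lemma desBegE_conj (n : ℕ) (σ : Equiv.Perm (Fin (2*n+1))) :
    desBegE (2*n+1) (Fin.revPerm * σ * Fin.revPerm) = desEndE (2*n+1) σ := by
  unfold desBegE desEndE
  refine Finset.card_bij' (fun p _ => (p.2.rev, p.1.rev)) (fun p _ => (p.2.rev, p.1.rev))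
    ?_ ?_ (by intro p _; simp [Fin.rev_rev]) (by intro p _; simp [Fin.rev_rev])
  · intro p hp
    simp only [Finset.mem_filter, Finset.mem_univ, true_and, Equiv.Perm.mul_apply,
      Fin.revPerm_apply] at hp ⊢
    obtain ⟨h1, h2, h3⟩ := hp
    have hb1 := p.1.isLt; have hb2 := p.2.isLt
    refine ⟨?_, ?_, ?_⟩
    · rw [Fin.val_rev, Fin.val_rev]; omega
    · exact Fin.rev_lt_rev.mp h2
    · have hb3 := (σ p.1.rev).isLt
      rw [Fin.val_rev] at h3
      exact (parity_flip hb3).mp h3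
  · intro p hp
    simp only [Finset.mem_filter, Finset.mem_univ, true_and, Equiv.Perm.mul_apply,
      Fin.revPerm_apply] at hp ⊢
    obtain ⟨h1, h2, h3⟩ := hp
    have hb1 := p.1.isLt; have hb2 := p.2.isLt
    refine ⟨?_, ?_, ?_⟩
    · rw [Fin.val_rev, Fin.val_rev]; omega
    · rw [Fin.rev_rev, Fin.rev_rev]
      exact Fin.rev_lt_rev.mpr h2
    · rw [Fin.rev_rev]
      have hb3 := (σ p.2).isLt
      rw [Fin.val_rev]
      exact (parity_flip hb3).mpr h3

private lemma phi_invol (n : ℕ) (σ : Equiv.Perm (Fin (2*n+1))) :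
    Fin.revPerm * (Fin.revPerm * σ * Fin.revPerm) * Fin.revPerm = σ := by
  ext i
  simp [Equiv.Perm.mul_apply, Fin.rev_rev]

theorem stmt_9 (n k : ℕ) (hn : 1 ≤ n) :
    R k (2*n+1) = P0 k (2*n+1) + P1 k (2*n+1) := by
  set m := 2*n+1 with hm
  have key : R k m = (Finset.univ.filter
      (fun σ : Equiv.Perm (Fin m) => desEndE m σ = k)).card := by
    unfold R
    apply Finset.card_bij (fun σ _ => Fin.revPerm * σ * Fin.revPerm)
    · intro σ hσ
      simp only [Finset.mem_filter, Finset.mem_univ, true_and] at hσ ⊢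
      rw [← hσ]
      conv_rhs => rw [← phi_invol n σ]
      rw [desBegE_conj]
    · intro σ _ τ _ h
      have := congrArg (fun ρ => Fin.revPerm * ρ * Fin.revPerm) h
      simpa only [phi_invol] using this
    · intro τ hτ
      simp only [Finset.mem_filter, Finset.mem_univ, true_and] at hτ
      exact ⟨Fin.revPerm * τ * Fin.revPerm, by
        simp only [Finset.mem_filter, Finset.mem_univ, true_and]
        rw [desBegE_conj]; exact hτ, (phi_invol n τ)⟩
  rw [key]
  unfold P0 P1
  rw [← Finset.card_union_of_disjoint]
  · congr 1
    ext σ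
    simp only [Finset.mem_union, Finset.mem_filter, Finset.mem_univ, true_and]
    constructor
    · intro h
      have h0 : (0:ℕ) < m := by omega
      rcases Nat.even_or_odd ((σ ⟨0, h0⟩ : ℕ) + 1) with he | ho
      · exact Or.inr ⟨⟨⟨0, h0⟩, rfl, he⟩, h⟩
      · exact Or.inl ⟨⟨⟨0, h0⟩, rfl, ho⟩, h⟩
    · rintro (⟨_, h⟩ | ⟨_, h⟩) <;> exact h
  · rw [Finset.disjoint_filter]
    rintro σ _ ⟨⟨i, hi0, hio⟩, _⟩ ⟨⟨j, hj0, hje⟩, _⟩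
    have : i = j := Fin.ext (by omega)
    subst this
    rw [Nat.odd_iff] at hio; rw [Nat.even_iff] at hje; omega


end DescentParity
end
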